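/- For every x₀ ∈ ℝ^r and every y lying in the relative interior of the Voronoi cell V(D(x₀)) (the interior of V(D(x₀)) relative to its affine span), one has sta(y) = sta(x₀), and hence D(y) = D(x₀). That is, the Delaunay cell D(·) is constant on the relative interior of each Voronoi cell. -/

import Mathlib

/-- The embedding `ℤ^r ⊆ ℝ^r`. -/
noncomputable def latE {r : ℕ} (lam : Fin r → ℤ) : Fin r → ℝ := fun i => (lam i : ℝ)

/-- The norm `|v| = √(B(v,v))` associated to the bilinear form `B`. -/
noncomputable def nrmB {r : ℕ} (B : LinearMap.BilinForm ℝ (Fin r → ℝ)) (v : Fin r → ℝ) : ℝ :=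
  Real.sqrt (B v v)

/-- `sta B x` is the set of `x`-stations: lattice points at minimal distance from `x`. -/
def sta {r : ℕ} (B : LinearMap.BilinForm ℝ (Fin r → ℝ)) (x : Fin r → ℝ) :
    Set (Fin r → ℤ) :=
  {lam | ∀ mu : Fin r → ℤ, nrmB B (x - latE lam) ≤ nrmB B (x - latE mu)}

/-- The Delaunay cell `D(x) = conv(sta(x)) ⊆ ℝ^r`. -/
noncomputable def Dcell {r : ℕ} (B : LinearMap.BilinForm ℝ (Fin r → ℝ)) (x : Fin r → ℝ) :
    Set (Fin r → ℝ) :=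
  convexHull ℝ (latE '' sta B x)

/-- The Voronoi cell `V(σ)` of a Delaunay cell `σ`: the closure of `{x : D(x) = σ}`. -/
noncomputable def Vcell {r : ℕ} (B : LinearMap.BilinForm ℝ (Fin r → ℝ))
    (σ : Set (Fin r → ℝ)) : Set (Fin r → ℝ) :=
  closure {x : Fin r → ℝ | Dcell B x = σ}

section Aux
variable {r : ℕ} {B : LinearMap.BilinForm ℝ (Fin r → ℝ)}

lemma qnn (hpos : ∀ x : Fin r → ℝ, x ≠ 0 → 0 < B x x) (v : Fin r → ℝ) : 0 ≤ B v v := by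
  rcases eq_or_ne v 0 with h | h
  · simp [h]
  · exact (hpos v h).le

lemma sta_iff (hpos : ∀ x : Fin r → ℝ, x ≠ 0 → 0 < B x x) {x : Fin r → ℝ} {lam : Fin r → ℤ} :
    lam ∈ sta B x ↔ ∀ mu : Fin r → ℤ,
      B (x - latE lam) (x - latE lam) ≤ B (x - latE mu) (x - latE mu) := by
  constructor
  · intro h mu
    exact (Real.sqrt_le_sqrt_iff (qnn hpos _)).mp (h mu)
  · intro h mu
    exact Real.sqrt_le_sqrt (h mu)

lemma lt_of_notin (hpos : ∀ x : Fin r → ℝ, x ≠ 0 → 0 < B x x) {x : Fin r → ℝ}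
    {lam lam₀ : Fin r → ℤ} (h₀ : lam₀ ∈ sta B x) (h : lam ∉ sta B x) :
    B (x - latE lam₀) (x - latE lam₀) < B (x - latE lam) (x - latE lam) := by
  rw [sta_iff hpos] at h h₀
  push_neg at h
  obtain ⟨mu, hmu⟩ := h
  exact lt_of_le_of_lt (h₀ mu) hmu

lemma affine_diff (hsymm : ∀ x y : Fin r → ℝ, B x y = B y x) (l m : Fin r → ℝ) :
    ∃ g : (Fin r → ℝ) → ℝ, Continuous g ∧
      (∀ (a b : Fin r → ℝ) (t s : ℝ), t + s = 1 →
        g (t • a + s • b) = t * g a + s * g b) ∧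
      (∀ x, g x = B (x - m) (x - m) - B (x - l) (x - l)) := by
  refine ⟨fun x => 2 * B x (l - m) + (B m m - B l l), ?_, ?_, ?_⟩
  · have hc : Continuous fun x : Fin r → ℝ => B x (l - m) :=
      (B.flip (l - m)).continuous_of_finiteDimensional
    exact (continuous_const.mul hc).add continuous_const
  · intro a b t s hts
    simp only [map_add, map_smul, LinearMap.add_apply, LinearMap.smul_apply, smul_eq_mul]
    linear_combination (B l l - B m m) * hts
  · intro x
    simp only [map_sub, LinearMap.sub_apply]
    linarith [hsymm x m, hsymm x l]

lemma q_combo {u v : Fin r → ℝ} {t s : ℝ} (ht : 0 ≤ t) (hs : 0 ≤ s) (hts : t + s = 1)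
    (hq : 0 ≤ B (u - v) (u - v)) :
    B (t • u + s • v) (t • u + s • v) ≤ t * B u u + s * B v v := by
  have key : t * B u u + s * B v v - B (t • u + s • v) (t • u + s • v)
      = t * s * (B (u - v) (u - v)) := by
    simp only [map_add, map_smul, LinearMap.add_apply, LinearMap.smul_apply, smul_eq_mul,
      map_sub, LinearMap.sub_apply]
    linear_combination (-(t * B u u + s * B v v)) * hts
  nlinarith [mul_nonneg (mul_nonneg ht hs) hq]

lemma sublevel_convex (hpos : ∀ x : Fin r → ℝ, x ≠ 0 → 0 < B x x) (x : Fin r → ℝ) (R : ℝ) :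
    Convex ℝ {v : Fin r → ℝ | B (x - v) (x - v) ≤ R} := by
  intro a ha b hb t s ht hs hts
  have h1 : x - (t • a + s • b) = t • (x - a) + s • (x - b) := by
    rw [smul_sub, smul_sub]
    rw [show t • x - t • a + (s • x - s • b) = (t + s) • x - (t • a + s • b) by
      rw [add_smul]; abel]
    rw [hts, one_smul]
  show B (x - (t • a + s • b)) (x - (t • a + s • b)) ≤ R
  rw [h1]
  calc B (t • (x - a) + s • (x - b)) (t • (x - a) + s • (x - b))
      ≤ t * B (x - a) (x - a) + s * B (x - b) (x - b) :=
        q_combo ht hs hts (qnn hpos _)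
    _ ≤ t * R + s * R := add_le_add (mul_le_mul_of_nonneg_left ha ht)
        (mul_le_mul_of_nonneg_left hb hs)
    _ = R := by rw [← add_mul, hts, one_mul]

lemma exists_sta (hr : 1 ≤ r) (hpos : ∀ x : Fin r → ℝ, x ≠ 0 → 0 < B x x)
    (x : Fin r → ℝ) : ∃ lam, lam ∈ sta B x := by
  haveI : Nonempty (Fin r) := ⟨⟨0, hr⟩⟩
  -- continuity of the quadratic form
  have hBc : Continuous fun v : Fin r → ℝ => B v v := by
    let Φ : (Fin r → ℝ) →ₗ[ℝ] ((Fin r → ℝ) →L[ℝ] ℝ) :=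
      (LinearMap.toContinuousLinearMap : ((Fin r → ℝ) →ₗ[ℝ] ℝ) ≃ₗ[ℝ] _).toLinearMap.comp B
    have hΦ : Continuous Φ := Φ.continuous_of_finiteDimensional
    have : Continuous fun v : Fin r → ℝ => (Φ v) v :=
      isBoundedBilinearMap_apply.continuous.comp (hΦ.prodMk continuous_id)
    exact this
  -- coercivity constant
  obtain ⟨w, hw, hwmin⟩ := (isCompact_sphere (0 : Fin r → ℝ) 1).exists_isMinOn
    (NormedSpace.sphere_nonempty.mpr zero_le_one) hBc.continuousOn
  have hw1 : ‖w‖ = 1 := by simpa using hw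
  have hwne : w ≠ 0 := by intro h; rw [h] at hw1; simp at hw1
  set c := B w w with hc
  have hcpos : 0 < c := hpos w hwne
  have hcoer : ∀ v : Fin r → ℝ, c * ‖v‖ ^ 2 ≤ B v v := by
    intro v
    rcases eq_or_ne v 0 with h | h
    · simp [h]
    · have hv : (0:ℝ) < ‖v‖ := norm_pos_iff.mpr h
      have hu : (‖v‖⁻¹ • v) ∈ Metric.sphere (0 : Fin r → ℝ) 1 := by
        simp [norm_smul, abs_of_pos (inv_pos.mpr hv), inv_mul_cancel₀ hv.ne']
      have h1 : c ≤ B (‖v‖⁻¹ • v) (‖v‖⁻¹ • v) := hwmin hu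
      have h2 : B (‖v‖⁻¹ • v) (‖v‖⁻¹ • v) = ‖v‖⁻¹ * ‖v‖⁻¹ * B v v := by
        simp only [map_smul, LinearMap.smul_apply, smul_eq_mul]; ring
      rw [h2] at h1
      have := mul_le_mul_of_nonneg_left h1 (le_of_lt (by positivity : (0:ℝ) < ‖v‖ ^ 2))
      calc c * ‖v‖ ^ 2 = ‖v‖ ^ 2 * c := by ring
        _ ≤ ‖v‖ ^ 2 * (‖v‖⁻¹ * ‖v‖⁻¹ * B v v) := this
        _ = B v v := by field_simp
  -- the candidate set is finite
  set K := B (x - latE 0) (x - latE 0) with hK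
  set T := {mu : Fin r → ℤ | B (x - latE mu) (x - latE mu) ≤ K} with hT
  have h0T : (0 : Fin r → ℤ) ∈ T := by show B _ _ ≤ K; exact le_refl _
  have hKnn : 0 ≤ K := qnn hpos _
  set ρ := Real.sqrt (K / c) with hρ
  set M := ‖x‖ + ρ with hM
  have hTbound : ∀ mu ∈ T, ∀ i, |mu i| ≤ ⌈M⌉ := by
    intro mu hmu i
    have h1 : c * ‖x - latE mu‖ ^ 2 ≤ K := le_trans (hcoer _) hmu
    have h2 : ‖x - latE mu‖ ^ 2 ≤ K / c := by
      rw [le_div_iff₀ hcpos]; linarith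
    have h3 : ‖x - latE mu‖ ≤ ρ :=
      (Real.le_sqrt (norm_nonneg _) (by positivity)).mpr h2
    have h4 : |x i - (mu i : ℝ)| ≤ ρ := by
      have := norm_le_pi_norm (x - latE mu) i
      simpa [latE, Real.norm_eq_abs] using this.trans h3
    have h5 : |x i| ≤ ‖x‖ := by
      have := norm_le_pi_norm x i
      simpa [Real.norm_eq_abs] using this
    have h6 : |(mu i : ℝ)| ≤ M := by
      have he : |(mu i : ℝ)| = |x i - (x i - (mu i : ℝ))| := by congr 1; ring
      have ht : |x i - (x i - (mu i : ℝ))| ≤ |x i| + |x i - (mu i : ℝ)| := abs_sub _ _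
      rw [he]
      calc |x i - (x i - (mu i : ℝ))| ≤ |x i| + |x i - (mu i : ℝ)| := ht
        _ ≤ ‖x‖ + ρ := add_le_add h5 h4
    have h7 : ((|mu i| : ℤ) : ℝ) ≤ ((⌈M⌉ : ℤ) : ℝ) := by
      rw [Int.cast_abs]
      exact h6.trans (Int.le_ceil M)
    exact_mod_cast h7
  have hTfin : T.Finite := by
    have hsub : T ⊆ Set.pi Set.univ (fun _ : Fin r => Set.Icc (-⌈M⌉) ⌈M⌉) := by
      intro mu hmu
      rw [Set.mem_univ_pi]
      intro i
      rcases abs_le.mp (hTbound mu hmu i) with ⟨h1, h2⟩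
      exact ⟨h1, h2⟩
    exact (Set.Finite.pi fun _ => Set.finite_Icc _ _).subset hsub
  obtain ⟨a, haT, hamin⟩ := Set.exists_min_image T
    (fun mu => B (x - latE mu) (x - latE mu)) hTfin ⟨0, h0T⟩
  refine ⟨a, (sta_iff hpos).mpr fun mu => ?_⟩
  by_cases hmu : mu ∈ T
  · exact hamin mu hmu
  · have h1 : K < B (x - latE mu) (x - latE mu) := lt_of_not_ge hmu
    exact (hamin 0 h0T).trans h1.le

lemma sta_sub_of_Dcell_eq (hr : 1 ≤ r) (hpos : ∀ x : Fin r → ℝ, x ≠ 0 → 0 < B x x)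
    {x x' : Fin r → ℝ} (h : Dcell B x = Dcell B x') : sta B x ⊆ sta B x' := by
  obtain ⟨mu₀, hmu₀⟩ := exists_sta hr hpos x'
  set R := B (x' - latE mu₀) (x' - latE mu₀) with hR
  have hC : Dcell B x' ⊆ {v : Fin r → ℝ | B (x' - v) (x' - v) ≤ R} := by
    apply convexHull_min _ (sublevel_convex hpos x' R)
    rintro _ ⟨nu, hnu, rfl⟩
    exact (sta_iff hpos).mp hnu mu₀
  intro lam hlam
  have h1 : latE lam ∈ Dcell B x := subset_convexHull ℝ _ ⟨lam, hlam, rfl⟩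
  rw [h] at h1
  have h2 : B (x' - latE lam) (x' - latE lam) ≤ R := hC h1
  refine (sta_iff hpos).mpr fun mu => h2.trans ((sta_iff hpos).mp hmu₀ mu)

lemma sta_eq_of_Dcell_eq (hr : 1 ≤ r) (hpos : ∀ x : Fin r → ℝ, x ≠ 0 → 0 < B x x)
    {x x' : Fin r → ℝ} (h : Dcell B x = Dcell B x') : sta B x = sta B x' :=
  Set.Subset.antisymm (sta_sub_of_Dcell_eq hr hpos h) (sta_sub_of_Dcell_eq hr hpos h.symm)

lemma convex_staEq (hsymm : ∀ x y : Fin r → ℝ, B x y = B y x)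
    (hpos : ∀ x : Fin r → ℝ, x ≠ 0 → 0 < B x x) (x₀ : Fin r → ℝ)
    {lam₀ : Fin r → ℤ} (hlam₀ : lam₀ ∈ sta B x₀) :
    Convex ℝ {x : Fin r → ℝ | sta B x = sta B x₀} := by
  intro a ha b hb t s ht hs hts
  have ha' : sta B a = sta B x₀ := ha
  have hb' : sta B b = sta B x₀ := hb
  show sta B (t • a + s • b) = sta B x₀
  apply Set.Subset.antisymm
  · -- sta z ⊆ sta x₀
    intro lam hlam
    by_contra hlamn
    obtain ⟨g, _, gaff, gval⟩ := affine_diff hsymm (latE lam₀) (latE lam)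
    have hga : 0 < g a := by
      rw [gval]
      have : lam ∉ sta B a := by rw [ha']; exact hlamn
      exact sub_pos.mpr (lt_of_notin hpos (ha' ▸ hlam₀) this)
    have hgb : 0 < g b := by
      rw [gval]
      have : lam ∉ sta B b := by rw [hb']; exact hlamn
      exact sub_pos.mpr (lt_of_notin hpos (hb' ▸ hlam₀) this)
    have hgz : 0 < g (t • a + s • b) := by
      rw [gaff a b t s hts]
      rcases ht.eq_or_lt with h | h
      · rw [← h] at hts ⊢; simp at hts; simp [hts]; linarith
      · nlinarith
    rw [gval] at hgz
    have := (sta_iff hpos).mp hlam lam₀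
    linarith
  · -- sta x₀ ⊆ sta z
    intro lam hlam
    refine (sta_iff hpos).mpr fun mu => ?_
    obtain ⟨g, _, gaff, gval⟩ := affine_diff hsymm (latE lam) (latE mu)
    have hga : 0 ≤ g a := by
      rw [gval]
      exact sub_nonneg.mpr ((sta_iff hpos).mp (ha'.symm ▸ hlam) mu)
    have hgb : 0 ≤ g b := by
      rw [gval]
      exact sub_nonneg.mpr ((sta_iff hpos).mp (hb'.symm ▸ hlam) mu)
    have hgz : 0 ≤ g (t • a + s • b) := by
      rw [gaff a b t s hts]
      exact add_nonneg (mul_nonneg ht hga) (mul_nonneg hs hgb)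
    rw [gval] at hgz
    linarith

end Aux

/-- for every `x₀ ∈ ℝ^r` and every `y` in the relative interior
(`intrinsicInterior`, the interior relative to the affine span) of the Voronoi cell
`V(D(x₀))`, one has `sta(y) = sta(x₀)` and hence `D(y) = D(x₀)`. -/
theorem stmt11 (r : ℕ) (hr : 1 ≤ r) (B : LinearMap.BilinForm ℝ (Fin r → ℝ))
    (hsymm : ∀ x y : Fin r → ℝ, B x y = B y x)
    (hpos : ∀ x : Fin r → ℝ, x ≠ 0 → 0 < B x x)
    (hint : ∀ lam mu : Fin r → ℤ, ∃ n : ℤ, B (latE lam) (latE mu) = (n : ℝ)) :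
    ∀ x₀ y : Fin r → ℝ,
      y ∈ intrinsicInterior ℝ (Vcell B (Dcell B x₀)) →
      sta B y = sta B x₀ ∧ Dcell B y = Dcell B x₀ := by
  intro x₀ y hy
  obtain ⟨lam₀, hlam₀⟩ := exists_sta hr hpos x₀
  have hUset : {x : Fin r → ℝ | Dcell B x = Dcell B x₀}
      = {x : Fin r → ℝ | sta B x = sta B x₀} := by
    ext x
    constructor
    · intro h; exact sta_eq_of_Dcell_eq hr hpos h
    · intro h
      show Dcell B x = Dcell B x₀
      unfold Dcell
      rw [show sta B x = sta B x₀ from h]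
  set U := {x : Fin r → ℝ | sta B x = sta B x₀} with hU
  have hy' : y ∈ intrinsicInterior ℝ (closure U) := by
    rwa [Vcell, hUset] at hy
  have hx₀U : x₀ ∈ U := rfl
  have hyc : y ∈ closure U := intrinsicInterior_subset hy'
  -- Step A : sta x₀ ⊆ sta y
  have hA : sta B x₀ ⊆ sta B y := by
    intro lam hlam
    refine (sta_iff hpos).mpr fun mu => ?_
    obtain ⟨g, gcont, gaff, gval⟩ := affine_diff hsymm (latE lam) (latE mu)
    have hclosed : IsClosed {x : Fin r → ℝ | 0 ≤ g x} :=
      isClosed_le continuous_const gcont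
    have hcl : closure U ⊆ {x : Fin r → ℝ | 0 ≤ g x} := by
      apply hclosed.closure_subset_iff.mpr
      intro x hx
      show 0 ≤ g x
      rw [gval]
      have hx' : sta B x = sta B x₀ := hx
      exact sub_nonneg.mpr ((sta_iff hpos).mp (hx'.symm ▸ hlam) mu)
    have h0 : 0 ≤ g y := hcl hyc
    rw [gval] at h0
    linarith
  -- Step B : sta y ⊆ sta x₀
  have hB : sta B y ⊆ sta B x₀ := by
    intro lam hlam
    by_contra hn
    obtain ⟨g, gcont, gaff, gval⟩ := affine_diff hsymm (latE lam₀) (latE lam)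
    have hgU : ∀ x ∈ U, 0 < g x := by
      intro x hx
      have hx' : sta B x = sta B x₀ := hx
      rw [gval]
      exact sub_pos.mpr (lt_of_notin hpos (hx'.symm ▸ hlam₀)
        (by rw [hx']; exact hn))
    have hgcl : ∀ x ∈ closure U, 0 ≤ g x := by
      intro x hx
      have hclosed : IsClosed {x : Fin r → ℝ | 0 ≤ g x} :=
        isClosed_le continuous_const gcont
      exact hclosed.closure_subset_iff.mpr (fun z hz => (hgU z hz).le) hx
    have hgy0 : g y = 0 := by
      have h1 : g y ≤ 0 := by
        rw [gval]
        exact sub_nonpos.mpr ((sta_iff hpos).mp hlam lam₀)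
      exact le_antisymm h1 (hgcl y hyc)
    have hx₀cl : x₀ ∈ closure U := subset_closure hx₀U
    have hyA : y ∈ affineSpan ℝ (closure U) := subset_affineSpan ℝ _ hyc
    have hx₀A : x₀ ∈ affineSpan ℝ (closure U) := subset_affineSpan ℝ _ hx₀cl
    obtain ⟨y', hy'int, hy'val⟩ := hy'
    have hmemA : ∀ t : ℝ, y + t • (y - x₀) ∈ affineSpan ℝ (closure U) := by
      intro t
      have := (affineSpan ℝ (closure U)).smul_vsub_vadd_mem t hyA hx₀A hyA
      simpa [vsub_eq_sub, vadd_eq_add, add_comm] using this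
    set γ : ℝ → affineSpan ℝ (closure U) := fun t => ⟨y + t • (y - x₀), hmemA t⟩ with hγ
    have hγcont : Continuous γ := by
      apply Continuous.subtype_mk
      exact continuous_const.add (continuous_id.smul continuous_const)
    have hγ0 : γ 0 = y' := Subtype.ext (by simp [hγ, hy'val])
    have hnb : γ ⁻¹' (interior ((↑) ⁻¹' (closure U))) ∈ nhds (0 : ℝ) :=
      hγcont.continuousAt.preimage_mem_nhds (isOpen_interior.mem_nhds (hγ0 ▸ hy'int))
    obtain ⟨ε, hε, hball⟩ := Metric.mem_nhds_iff.mp hnb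
    have hεmem : (ε / 2) ∈ Metric.ball (0 : ℝ) ε := by
      rw [Metric.mem_ball, Real.dist_eq, sub_zero, abs_of_pos (by linarith)]
      linarith
    have hz' : γ (ε / 2) ∈ (Subtype.val ⁻¹' closure U :
        Set (affineSpan ℝ (closure U))) := interior_subset (hball hεmem)
    have hz : y + (ε / 2) • (y - x₀) ∈ closure U := hz' 
    have hgz : 0 ≤ g (y + (ε / 2) • (y - x₀)) := hgcl _ hz
    have heq : y + (ε / 2) • (y - x₀) = (1 + ε / 2) • y + (-(ε / 2)) • x₀ := by
      rw [add_smul, one_smul, neg_smul, smul_sub]; abel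
    have hval : g (y + (ε / 2) • (y - x₀))
        = (1 + ε / 2) * g y + (-(ε / 2)) * g x₀ := by
      rw [heq]; exact gaff _ _ _ _ (by ring)
    have hgx₀ : 0 < g x₀ := hgU x₀ hx₀U
    rw [hgy0] at hval
    nlinarith [mul_pos (half_pos hε) hgx₀]
  have h1 : sta B y = sta B x₀ := Set.Subset.antisymm hB hA
  exact ⟨h1, by unfold Dcell; rw [h1]⟩
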